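/- Assume MA_κ. If 𝓕 is a family of sets in 𝓜_ln with card(𝓕) ≤ κ, then ⋃𝓕 belongs to 𝓜_ln. -/

import Mathlib

open MeasureTheory Filter

/-- `S ⊆ ℝ` is an interval. -/
def IsIntervalSet (S : Set ℝ) : Prop := S.OrdConnected

/-- A set `M ⊆ ℝ` is microscopic if for each `ε > 0` there is a sequence of intervals
`(J n)` covering `M` with `|J n| ≤ ε ^ (n + 1)` for each `n`. -/
def Microscopic (M : Set ℝ) : Prop :=
  ∀ ε : ℝ, 0 < ε → ∃ J : ℕ → Set ℝ,
    (∀ n, IsIntervalSet (J n)) ∧ M ⊆ (⋃ n, J n) ∧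
      ∀ n, volume (J n) ≤ ENNReal.ofReal (ε ^ (n + 1))

/-- A set `M ⊆ ℝ` belongs to `𝓜_ln` if for every `ε > 0` there is a sequence of intervals
`(J n)` covering `M` with `|J n| ≤ ε ^ (ln (n + 2))`. -/
def MLn (M : Set ℝ) : Prop :=
  ∀ ε : ℝ, 0 < ε → ∃ J : ℕ → Set ℝ,
    (∀ n, IsIntervalSet (J n)) ∧ M ⊆ (⋃ n, J n) ∧
      ∀ n, volume (J n) ≤ ENNReal.ofReal (ε ^ Real.log ((n : ℝ) + 2))

/-- Martin's axiom for the cardinal `κ`. -/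
def MartinsAxiom (κ : Cardinal) : Prop :=
  ∀ (P : Type) [PartialOrder P], Nonempty P →
    (∀ A : Set P, (∀ p ∈ A, ∀ q ∈ A, p ≠ q → ¬∃ r : P, r ≤ p ∧ r ≤ q) → A.Countable) →
    ∀ 𝓓 : Set (Set P), Cardinal.mk ↥𝓓 ≤ κ →
      (∀ D ∈ 𝓓, ∀ p : P, ∃ q ∈ D, q ≤ p) →
      ∃ G : Set P,
        (∀ p ∈ G, ∀ q : P, p ≤ q → q ∈ G) ∧
        (∀ p ∈ G, ∀ q ∈ G, ∃ r ∈ G, r ≤ p ∧ r ≤ q) ∧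
        ∀ D ∈ 𝓓, (G ∩ D).Nonempty

open Set
open scoped ENNReal
namespace MaMln


noncomputable def w (s : ℝ) (I : ℚ × ℚ) : ℝ≥0∞ :=
  (ENNReal.ofReal ((I.2 : ℝ) - (I.1 : ℝ))) ^ s

def riSet (I : ℚ × ℚ) : Set ℝ := Set.Ioo (I.1 : ℝ) (I.2 : ℝ)

noncomputable def SumW (s : ℝ) (C : Set (ℚ × ℚ)) : ℝ≥0∞ :=
  ∑' I : ℚ × ℚ, C.indicator (w s) I

lemma SumW_mono {s : ℝ} {C D : Set (ℚ × ℚ)} (h : C ⊆ D) : SumW s C ≤ SumW s D :=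
  ENNReal.tsum_le_tsum fun I => Set.indicator_le_indicator_of_subset h (fun _ => zero_le) I

lemma SumW_union_le (s : ℝ) (C D : Set (ℚ × ℚ)) :
    SumW s (C ∪ D) ≤ SumW s C + SumW s D := by
  rw [SumW, SumW, SumW, ← ENNReal.tsum_add]
  refine ENNReal.tsum_le_tsum fun I => ?_
  classical
  by_cases hC : I ∈ C
  · calc (C ∪ D).indicator (w s) I ≤ w s I := Set.indicator_le_self _ _ I
      _ = C.indicator (w s) I := by rw [Set.indicator_of_mem hC]
      _ ≤ _ := le_add_right le_rfl
  · by_cases hD : I ∈ D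
    · calc (C ∪ D).indicator (w s) I ≤ w s I := Set.indicator_le_self _ _ I
        _ = D.indicator (w s) I := by rw [Set.indicator_of_mem hD]
        _ ≤ _ := le_add_left le_rfl
    · rw [Set.indicator_of_notMem (fun h => h.elim hC hD)]
      exact zero_le

lemma le_SumW {s : ℝ} {C : Set (ℚ × ℚ)} {I : ℚ × ℚ} (h : I ∈ C) : w s I ≤ SumW s C := by
  have := ENNReal.le_tsum (f := C.indicator (w s)) I
  rwa [Set.indicator_of_mem h] at this

lemma SumW_empty (s : ℝ) : SumW s ∅ = 0 := by simp [SumW]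

lemma SumW_lt_top {s : ℝ} {C : Set (ℚ × ℚ)} (h : SumW s C < 4⁻¹) : SumW s C ≠ ∞ :=
  (h.trans (by norm_num)).ne

/-- finite subset capturing all but `e` of the sum -/
lemma exists_tail (s : ℝ) (C : Set (ℚ × ℚ)) (hC : SumW s C < 4⁻¹) {e : ℝ≥0∞} (he : 0 < e) :
    ∃ F : Finset (ℚ × ℚ), ↑F ⊆ C ∧ SumW s (C \ ↑F) ≤ e := by
  classical
  by_cases hle : SumW s C ≤ e
  · exact ⟨∅, by simp, le_trans (SumW_mono diff_subset) hle⟩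
  push_neg at hle
  have hfin : SumW s C ≠ ∞ := SumW_lt_top hC
  have h2 : SumW s C = ⨆ F : Finset (ℚ × ℚ), ∑ I ∈ F, C.indicator (w s) I :=
    ENNReal.tsum_eq_iSup_sum
  have h1 : SumW s C - e < ⨆ F : Finset (ℚ × ℚ), ∑ I ∈ F, C.indicator (w s) I := by
    rw [← h2]
    exact ENNReal.sub_lt_self hfin (fun h0 => by simp [h0] at hle) he.ne'
  obtain ⟨F0, hF0⟩ := lt_iSup_iff.mp h1
  set F : Finset (ℚ × ℚ) := F0.filter (· ∈ C) with hFdef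
  have hFsub : ↑F ⊆ C := fun I hI => (Finset.mem_filter.mp hI).2
  have hsum_eq : ∑ I ∈ F0, C.indicator (w s) I = ∑ I ∈ F, w s I := by
    rw [hFdef, Finset.sum_filter]
    exact Finset.sum_congr rfl fun I _ => Set.indicator_apply C (w s) I
  -- split the sum
  have hsplit : SumW s C = SumW s (C \ ↑F) + ∑ I ∈ F, w s I := by
    have hpt : ∀ I, C.indicator (w s) I
        = (C \ ↑F).indicator (w s) I + (↑F : Set (ℚ × ℚ)).indicator (w s) I := by
      intro I
      by_cases hF : I ∈ (↑F : Set (ℚ × ℚ))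
      · have hCm : I ∈ C := hFsub hF
        simp [Set.indicator_apply, Set.mem_diff, hF, hCm]
      · by_cases hCm : I ∈ C <;>
          simp [Set.indicator_apply, Set.mem_diff, hF, hCm]
    have htF : ∑' I : ℚ × ℚ, (↑F : Set (ℚ × ℚ)).indicator (w s) I = ∑ I ∈ F, w s I := by
      rw [tsum_eq_sum (s := F) (fun I hI => Set.indicator_of_notMem (by simpa using hI) _)]
      exact Finset.sum_congr rfl fun I hI => Set.indicator_of_mem (by simpa using hI) _
    rw [SumW]
    calc ∑' I : ℚ × ℚ, C.indicator (w s) I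
        = ∑' I : ℚ × ℚ, ((C \ ↑F).indicator (w s) I + (↑F : Set (ℚ × ℚ)).indicator (w s) I) :=
          tsum_congr hpt
      _ = SumW s (C \ ↑F) + ∑ I ∈ F, w s I := by rw [ENNReal.tsum_add, htF]; rfl
  have hFsum_fin : (∑ I ∈ F, w s I) ≠ ∞ := by
    intro htop
    rw [hsplit, htop, add_top] at hfin
    exact hfin rfl
  refine ⟨F, hFsub, ?_⟩
  have h4 : SumW s C ≤ e + ∑ I ∈ F, w s I := by
    rw [hsum_eq] at hF0
    exact tsub_le_iff_left.mp hF0.le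
  rw [hsplit] at h4
  calc SumW s (C \ ↑F) = SumW s (C \ ↑F) + ∑ I ∈ F, w s I - ∑ I ∈ F, w s I :=
        (ENNReal.add_sub_cancel_right hFsum_fin).symm
    _ ≤ e + ∑ I ∈ F, w s I - ∑ I ∈ F, w s I := tsub_le_tsub_right h4 _
    _ = e := ENNReal.add_sub_cancel_right hFsum_fin

def Cond (s : ℝ) : Type := {C : Set (ℚ × ℚ) // SumW s C < 4⁻¹}

instance (s : ℝ) : PartialOrder (Cond s) where
  le p q := q.1 ⊆ p.1
  le_refl p := Set.Subset.rfl
  le_trans p q r h1 h2 := Set.Subset.trans h2 h1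
  le_antisymm p q h1 h2 := Subtype.ext (Set.Subset.antisymm h2 h1)

lemma Cond.le_def {s : ℝ} {p q : Cond s} : p ≤ q ↔ q.1 ⊆ p.1 := ⟨fun h => h, fun h => h⟩

lemma cond_ccc (s : ℝ) (A : Set (Cond s))
    (hA : ∀ p ∈ A, ∀ q ∈ A, p ≠ q → ¬∃ r : Cond s, r ≤ p ∧ r ≤ q) : A.Countable := by
  classical
  have key : ∀ p : Cond s, ∃ (k : ℕ) (F : Finset (ℚ × ℚ)), ↑F ⊆ p.1 ∧
      SumW s p.1 + 2⁻¹ ^ k < 4⁻¹ ∧ SumW s (p.1 \ ↑F) ≤ 2⁻¹ ^ k := by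
    intro p
    have h1 : (4⁻¹ : ℝ≥0∞) - SumW s p.1 ≠ 0 := by
      rw [ne_eq, tsub_eq_zero_iff_le]
      exact not_le.mpr p.2
    obtain ⟨k, hk⟩ := ENNReal.exists_inv_two_pow_lt h1
    have hkpos : (0 : ℝ≥0∞) < 2⁻¹ ^ k := by
      apply ENNReal.pow_pos
      simp
    obtain ⟨F, hF1, hF2⟩ := exists_tail s p.1 p.2 hkpos
    refine ⟨k, F, hF1, ?_, hF2⟩
    calc SumW s p.1 + 2⁻¹ ^ k < SumW s p.1 + ((4 : ℝ≥0∞)⁻¹ - SumW s p.1) :=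
          ENNReal.add_lt_add_left (SumW_lt_top p.2) hk
      _ = 4⁻¹ := add_tsub_cancel_of_le p.2.le
  choose k F hF1 hF2 hF3 using key
  have hinj : ∀ p ∈ A, ∀ q ∈ A, k p = k q → F p = F q → p = q := by
    intro p hp q hq hkeq hFeq
    by_contra hne
    refine hA p hp q hq hne ⟨⟨p.1 ∪ q.1, ?_⟩, Cond.le_def.mpr subset_union_left,
      Cond.le_def.mpr subset_union_right⟩
    have hsub : p.1 ∪ q.1 ⊆ p.1 ∪ (q.1 \ ↑(F q)) := by
      intro x hx
      rcases hx with hx | hx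
      · exact Or.inl hx
      · by_cases hxF : x ∈ (↑(F q) : Set (ℚ × ℚ))
        · exact Or.inl (by rw [← hFeq] at hxF; exact hF1 p hxF)
        · exact Or.inr ⟨hx, hxF⟩
    calc SumW s (p.1 ∪ q.1) ≤ SumW s (p.1 ∪ (q.1 \ ↑(F q))) := SumW_mono hsub
      _ ≤ SumW s p.1 + SumW s (q.1 \ ↑(F q)) := SumW_union_le _ _ _
      _ ≤ SumW s p.1 + 2⁻¹ ^ (k p) := by
          rw [hkeq]
          exact add_le_add le_rfl (hF3 q)
      _ < 4⁻¹ := hF2 p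
  have hcnt : Countable (ℕ × Finset (ℚ × ℚ)) := inferInstance
  rw [← Set.countable_coe_iff]
  have : Function.Injective (fun p : ↥A => (k p.1, F p.1)) := by
    intro p q h
    rw [Prod.mk.injEq] at h
    exact Subtype.ext (hinj p.1 p.2 q.1 q.2 h.1 h.2)
  exact this.countable

/-- an ordconnected set of small measure is enclosed in a small rational interval -/
lemma exists_rat_encl (J : Set ℝ) (hJ : J.OrdConnected) {l : ℝ} (hl : 0 < l)
    (hv : volume J ≤ ENNReal.ofReal l) :
    ∃ I : ℚ × ℚ, J ⊆ riSet I ∧ ((I.2 : ℝ) - (I.1 : ℝ)) ≤ 3 * l := by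
  rcases Set.eq_empty_or_nonempty J with hJe | ⟨x₀, hx₀⟩
  · obtain ⟨q, hq0, hql⟩ := exists_rat_btwn hl
    refine ⟨(0, q), by simp [hJe, riSet], ?_⟩
    push_cast
    nlinarith
  · have hbdd : BddAbove J ∧ BddBelow J := by
      constructor
      · by_contra hna
        rw [not_bddAbove_iff] at hna
        obtain ⟨y, hy, hygt⟩ := hna (x₀ + l)
        have hIcc : Set.Icc x₀ y ⊆ J := hJ.out hx₀ hy
        have : ENNReal.ofReal (y - x₀) ≤ ENNReal.ofReal l := by
          calc ENNReal.ofReal (y - x₀) = volume (Set.Icc x₀ y) := (Real.volume_Icc).symm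
            _ ≤ volume J := measure_mono hIcc
            _ ≤ _ := hv
        rw [ENNReal.ofReal_le_ofReal_iff hl.le] at this
        linarith
      · by_contra hna
        rw [not_bddBelow_iff] at hna
        obtain ⟨y, hy, hylt⟩ := hna (x₀ - l)
        have hIcc : Set.Icc y x₀ ⊆ J := hJ.out hy hx₀
        have : ENNReal.ofReal (x₀ - y) ≤ ENNReal.ofReal l := by
          calc ENNReal.ofReal (x₀ - y) = volume (Set.Icc y x₀) := (Real.volume_Icc).symm
            _ ≤ volume J := measure_mono hIcc
            _ ≤ _ := hv
        rw [ENNReal.ofReal_le_ofReal_iff hl.le] at this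
        linarith
    set a := sInf J with ha
    set b := sSup J with hb
    have hax : a ≤ x₀ := csInf_le hbdd.2 hx₀
    have hxb : x₀ ≤ b := le_csSup hbdd.1 hx₀
    have hsub : Set.Ioo a b ⊆ J := by
      intro x hx
      obtain ⟨u, hu, hux⟩ := exists_lt_of_csInf_lt ⟨x₀, hx₀⟩ hx.1
      obtain ⟨v, hv', hxv⟩ := exists_lt_of_lt_csSup ⟨x₀, hx₀⟩ hx.2
      exact hJ.out hu hv' ⟨hux.le, hxv.le⟩
    have hba : b - a ≤ l := by
      have : ENNReal.ofReal (b - a) ≤ ENNReal.ofReal l := by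
        calc ENNReal.ofReal (b - a) = volume (Set.Ioo a b) := (Real.volume_Ioo).symm
          _ ≤ volume J := measure_mono hsub
          _ ≤ _ := hv
      rwa [ENNReal.ofReal_le_ofReal_iff hl.le] at this
    obtain ⟨q1, hq1a, hq1b⟩ := exists_rat_btwn (show a - l < a by linarith)
    obtain ⟨q2, hq2a, hq2b⟩ := exists_rat_btwn (show b < b + l by linarith)
    refine ⟨(q1, q2), ?_, ?_⟩
    · intro x hx
      exact ⟨lt_of_lt_of_le hq1b (csInf_le hbdd.2 hx), lt_of_le_of_lt (le_csSup hbdd.1 hx) hq2a⟩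
    · simp only
      linarith

lemma sum_tel (N : ℕ) :
    ∑ n ∈ Finset.range N, (1/((n:ℝ)+1) - 1/((n:ℝ)+2)) = 1 - 1/((N:ℝ)+1) := by
  induction N with
  | zero => simp
  | succ N ih =>
      rw [Finset.sum_range_succ, ih]
      have h1 : ((N:ℝ)+1) ≠ 0 := by positivity
      have h2 : ((N:ℝ)+2) ≠ 0 := by positivity
      push_cast
      field_simp
      ring

lemma tsum_tel_le_one : ∑' n : ℕ, ENNReal.ofReal (1/((n:ℝ)+1) - 1/((n:ℝ)+2)) ≤ 1 := by
  rw [ENNReal.tsum_eq_iSup_sum]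
  refine iSup_le fun F => ?_
  obtain ⟨N, hN⟩ := F.exists_nat_subset_range
  have hnn : ∀ n : ℕ, (0:ℝ) ≤ 1/((n:ℝ)+1) - 1/((n:ℝ)+2) := by
    intro n
    have h1 : (0:ℝ) < (n:ℝ) + 1 := by positivity
    have h2 : (0:ℝ) < (n:ℝ) + 2 := by positivity
    rw [sub_nonneg, div_le_div_iff₀ h2 h1]
    nlinarith
  calc ∑ n ∈ F, ENNReal.ofReal (1/((n:ℝ)+1) - 1/((n:ℝ)+2))
      ≤ ∑ n ∈ Finset.range N, ENNReal.ofReal (1/((n:ℝ)+1) - 1/((n:ℝ)+2)) :=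
        Finset.sum_le_sum_of_subset hN
    _ = ENNReal.ofReal (∑ n ∈ Finset.range N, (1/((n:ℝ)+1) - 1/((n:ℝ)+2))) :=
        (ENNReal.ofReal_sum_of_nonneg (fun n _ => hnn n)).symm
    _ ≤ 1 := by
        rw [sum_tel]
        have h1 : (0:ℝ) < (N:ℝ) + 1 := by positivity
        have : (1 - 1/((N:ℝ)+1)) ≤ 1 := by
          have : 0 < 1/((N:ℝ)+1) := by positivity
          linarith
        calc ENNReal.ofReal (1 - 1/((N:ℝ)+1)) ≤ ENNReal.ofReal 1 :=
              ENNReal.ofReal_le_ofReal this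
          _ = 1 := ENNReal.ofReal_one

end MaMln

namespace MaMln

lemma smallCover {M : Set ℝ} (hM : MLn M) {s : ℝ} (hs0 : 0 < s) (hs1 : s ≤ 1)
    {η : ℝ≥0∞} (hη : 0 < η) :
    ∃ C : Set (ℚ × ℚ), (M ⊆ ⋃ I ∈ C, riSet I) ∧ SumW s C < η := by
  classical
  obtain ⟨k, hk⟩ := ENNReal.exists_inv_two_pow_lt
    (show η / 3 ≠ 0 from (ENNReal.div_pos hη.ne' (by norm_num)).ne')
  set t : ℝ := ((k : ℝ) + 2) / s with htdef
  have hts : t * s = (k : ℝ) + 2 := div_mul_cancel₀ _ hs0.ne'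
  have ht0 : 0 < t := div_pos (by positivity) hs0
  set ε' : ℝ := Real.exp (-t) with hε'def
  obtain ⟨J, hJint, hJcov, hJvol⟩ := hM ε' (Real.exp_pos _)
  have hn2 : ∀ n : ℕ, (0:ℝ) < (n:ℝ) + 2 := fun n => by positivity
  have hbnd : ∀ n : ℕ, ε' ^ Real.log ((n:ℝ)+2) = ((n:ℝ)+2) ^ (-t) := by
    intro n
    rw [hε'def, Real.rpow_def_of_pos (Real.exp_pos _), Real.log_exp,
      Real.rpow_def_of_pos (hn2 n), mul_comm]
  have hln : ∀ n : ℕ, (0:ℝ) < ((n:ℝ)+2) ^ (-t) := fun n => Real.rpow_pos_of_pos (hn2 n) _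
  have hencl : ∀ n : ℕ, ∃ I : ℚ × ℚ, J n ⊆ riSet I ∧
      ((I.2 : ℝ) - (I.1 : ℝ)) ≤ 3 * (((n:ℝ)+2) ^ (-t)) := by
    intro n
    refine exists_rat_encl (J n) (hJint n) (hln n) ?_
    rw [← hbnd n]
    exact hJvol n
  choose K hK1 hK2 using hencl
  refine ⟨Set.range K, ?_, ?_⟩
  · intro x hx
    obtain ⟨_, ⟨n, rfl⟩, hxn⟩ := hJcov hx
    exact Set.mem_biUnion (Set.mem_range_self n) (hK1 n hxn)
  · -- sum bound
    have h1 : SumW s (Set.range K) ≤ ∑' n : ℕ, w s (K n) := by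
      rw [SumW, ← tsum_subtype (Set.range K) (w s)]
      exact ENNReal.tsum_le_tsum_comp_of_surjective Set.rangeFactorization_surjective
        (fun I : ↥(Set.range K) => w s I)
    have h2 : ∀ n : ℕ, w s (K n) ≤
        ENNReal.ofReal ((3 * (1/2)^k) * (1/((n:ℝ)+1) - 1/((n:ℝ)+2))) := by
      intro n
      have hle : w s (K n) ≤ ENNReal.ofReal ((3 * (((n:ℝ)+2) ^ (-t))) ^ s) := by
        rw [w, ← ENNReal.ofReal_rpow_of_pos (by positivity)]
        exact ENNReal.rpow_le_rpow (ENNReal.ofReal_le_ofReal (hK2 n)) hs0.le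
      refine hle.trans (ENNReal.ofReal_le_ofReal ?_)
      -- real inequality
      have e1 : (3 * (((n:ℝ)+2) ^ (-t))) ^ s = 3 ^ s * ((((n:ℝ)+2) ^ (-t)) ^ s) :=
        Real.mul_rpow (by norm_num) (hln n).le
      have e2 : ((((n:ℝ)+2) ^ (-t)) ^ s) = ((n:ℝ)+2) ^ (-(t*s)) := by
        rw [← Real.rpow_mul (hn2 n).le, neg_mul]
      have e3 : (3:ℝ) ^ s ≤ 3 := by
        calc (3:ℝ) ^ s ≤ (3:ℝ) ^ (1:ℝ) := Real.rpow_le_rpow_of_exponent_le (by norm_num) hs1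
          _ = 3 := Real.rpow_one 3
      have e4 : ((n:ℝ)+2) ^ (-(t*s)) ≤ (1/2)^k * (1/((n:ℝ)+1) - 1/((n:ℝ)+2)) := by
        rw [hts]
        have hcast : (((k:ℝ)) + 2) = ((k + 2 : ℕ) : ℝ) := by push_cast; ring
        rw [Real.rpow_neg (hn2 n).le, hcast, Real.rpow_natCast]
        have hpow : (2:ℝ)^k * (((n:ℝ)+1) * ((n:ℝ)+2)) ≤ ((n:ℝ)+2) ^ (k+2) := by
          rw [pow_add]
          have hA : (2:ℝ)^k ≤ ((n:ℝ)+2)^k :=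
            pow_le_pow_left₀ (by norm_num) (by push_cast; linarith) k
          have hB : ((n:ℝ)+1) * ((n:ℝ)+2) ≤ ((n:ℝ)+2)^2 := by nlinarith [hn2 n]
          have h2k : (0:ℝ) < 2^k := by positivity
          nlinarith [pow_pos (hn2 n) k, pow_pos (hn2 n) 2]
        have hd : 1/((n:ℝ)+1) - 1/((n:ℝ)+2) = (((n:ℝ)+1) * ((n:ℝ)+2))⁻¹ := by
          field_simp
          ring
        rw [hd]
        have heq : ((1:ℝ)/2)^k * ((((n:ℝ)+1) * ((n:ℝ)+2))⁻¹)
            = ((2:ℝ)^k * (((n:ℝ)+1)*((n:ℝ)+2)))⁻¹ := by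
          rw [mul_inv, mul_inv, one_div, inv_pow, mul_inv]
        rw [heq]
        exact inv_anti₀ (by positivity) hpow
      calc (3 * (((n:ℝ)+2) ^ (-t))) ^ s = 3 ^ s * ((n:ℝ)+2) ^ (-(t*s)) := by rw [e1, e2]
        _ ≤ 3 * ((1/2)^k * (1/((n:ℝ)+1) - 1/((n:ℝ)+2))) := by
            have hnn : (0:ℝ) ≤ ((n:ℝ)+2) ^ (-(t*s)) := (Real.rpow_pos_of_pos (hn2 n) _).le
            have h3 : (0:ℝ) ≤ 3 ^ s := Real.rpow_nonneg (by norm_num) s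
            nlinarith [e3, e4, Real.rpow_pos_of_pos (hn2 n) (-(t*s))]
        _ = (3 * (1/2)^k) * (1/((n:ℝ)+1) - 1/((n:ℝ)+2)) := by ring
    calc SumW s (Set.range K) ≤ ∑' n : ℕ, w s (K n) := h1
      _ ≤ ∑' n : ℕ, ENNReal.ofReal ((3 * (1/2)^k) * (1/((n:ℝ)+1) - 1/((n:ℝ)+2))) :=
          ENNReal.tsum_le_tsum h2
      _ = ENNReal.ofReal (3 * (1/2)^k) *
          ∑' n : ℕ, ENNReal.ofReal (1/((n:ℝ)+1) - 1/((n:ℝ)+2)) := by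
          rw [← ENNReal.tsum_mul_left]
          refine tsum_congr fun n => ?_
          rw [← ENNReal.ofReal_mul (by positivity)]
      _ ≤ ENNReal.ofReal (3 * (1/2)^k) * 1 := by
          exact mul_le_mul_right tsum_tel_le_one _
      _ = ENNReal.ofReal 3 * (ENNReal.ofReal (1/2))^k := by
          rw [mul_one, ENNReal.ofReal_mul (by norm_num), ENNReal.ofReal_pow (by norm_num)]
      _ < η := by
          have hhalf : ENNReal.ofReal (1/2) = 2⁻¹ := by
            rw [show (1/2 : ℝ) = (2:ℝ)⁻¹ by norm_num,
              ENNReal.ofReal_inv_of_pos (by norm_num)]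
            norm_num
          have h3 : ENNReal.ofReal 3 = 3 := by norm_num
          rw [hhalf, h3]
          calc (3:ℝ≥0∞) * 2⁻¹^k < 3 * (η/3) := by
                refine ENNReal.mul_lt_mul_right ?_ ?_ hk
                · norm_num
                · norm_num
            _ = η := by
                rw [mul_comm, ENNReal.div_mul_cancel (by norm_num) (by norm_num)]

end MaMln

namespace MaMln

lemma extraction {c : ℝ} (hc : 1 ≤ c) {𝒞 : Set (ℚ × ℚ)}
    (hS : SumW (1/(2*c)) 𝒞 ≤ 4⁻¹) :
    ∃ J : ℕ → Set ℝ, (∀ n, IsIntervalSet (J n)) ∧ (⋃ I ∈ 𝒞, riSet I) ⊆ (⋃ n, J n) ∧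
      ∀ n, volume (J n) ≤ ENNReal.ofReal (((n:ℝ)+2) ^ (-c)) := by
  classical
  set s : ℝ := 1/(2*c) with hsdef
  have hc0 : 0 < c := lt_of_lt_of_le one_pos hc
  have hs0 : 0 < s := by positivity
  set len : ℚ × ℚ → ℝ := fun I => (I.2:ℝ) - (I.1:ℝ) with hlendef
  set enc : ℚ × ℚ → ℕ := fun I => Encodable.encode I with hencdef
  have hencinj : Function.Injective enc := fun a b h => Encodable.encode_injective h
  set Cp : Set (ℚ × ℚ) := {I | I ∈ 𝒞 ∧ 0 < len I} with hCpdef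
  set lexlt : ℚ × ℚ → ℚ × ℚ → Prop :=
    fun J I => len I < len J ∨ (len J = len I ∧ enc J < enc I) with hlexdef
  set B : ℚ × ℚ → Set (ℚ × ℚ) := fun I => {J | J ∈ Cp ∧ lexlt J I} with hBdef
  have hSfin : (∑' I : ℚ × ℚ, 𝒞.indicator (w s) I) ≠ ∞ := by
    refine ne_top_of_le_ne_top ?_ hS
    norm_num
  have hwge : ∀ I : ℚ × ℚ, ∀ J : ℚ × ℚ, J ∈ 𝒞 → len I ≤ len J →
      ENNReal.ofReal (len I) ^ s ≤ 𝒞.indicator (w s) J := by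
    intro I J hJ h
    rw [Set.indicator_of_mem hJ, w]
    exact ENNReal.rpow_le_rpow (ENNReal.ofReal_le_ofReal h) hs0.le
  have hHfin : ∀ I : ℚ × ℚ, 0 < len I → {J : ℚ × ℚ | J ∈ 𝒞 ∧ len I ≤ len J}.Finite := by
    intro I hI
    have hne : (ENNReal.ofReal (len I) ^ s) ≠ 0 := by
      refine (ENNReal.rpow_pos ?_ ?_).ne'
      · exact ENNReal.ofReal_pos.mpr hI
      · exact ENNReal.ofReal_ne_top
    exact (ENNReal.finite_const_le_of_tsum_ne_top hSfin hne).subset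
      (fun J hJ => hwge I J hJ.1 hJ.2)
  have hBsub : ∀ I : ℚ × ℚ, B I ⊆ {J : ℚ × ℚ | J ∈ 𝒞 ∧ len I ≤ len J} := by
    intro I J hJ
    refine ⟨hJ.1.1, ?_⟩
    rcases hJ.2 with h | h
    · exact h.le
    · exact h.1.ge
  have hBfin : ∀ I ∈ Cp, (B I).Finite := fun I hI => (hHfin I hI.2).subset (hBsub I)
  set rank : ℚ × ℚ → ℕ := fun I => (B I).ncard with hrankdef
  have hIBnot : ∀ I : ℚ × ℚ, I ∉ B I := by
    intro I hI
    rcases hI.2 with h | h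
    · exact lt_irrefl _ h
    · exact lt_irrefl _ h.2
  -- key counting bound
  have hkey : ∀ I ∈ Cp, ((rank I : ℝ≥0∞) + 1) * ENNReal.ofReal (len I) ^ s ≤ 4⁻¹ := by
    intro I hI
    set H : Set (ℚ × ℚ) := {J : ℚ × ℚ | J ∈ 𝒞 ∧ len I ≤ len J} with hHdef
    have hHf : H.Finite := hHfin I hI.2
    have hins : insert I (B I) ⊆ H := by
      intro J hJ
      rcases Set.mem_insert_iff.mp hJ with rfl | hJ
      · exact ⟨hI.1, le_refl _⟩
      · exact hBsub I hJ
    have hcard1 : rank I + 1 = (insert I (B I)).ncard :=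
      (Set.ncard_insert_of_notMem (hIBnot I) (hBfin I hI)).symm
    have hcard2 : (insert I (B I)).ncard ≤ H.ncard := Set.ncard_le_ncard hins hHf
    have hcard3 : (H.ncard : ℝ≥0∞) * (ENNReal.ofReal (len I) ^ s) ≤ 4⁻¹ := by
      have hsum : ∑ J ∈ hHf.toFinset, (ENNReal.ofReal (len I) ^ s)
          ≤ ∑ J ∈ hHf.toFinset, 𝒞.indicator (w s) J := by
        refine Finset.sum_le_sum fun J hJ => ?_
        have hJH : J ∈ H := hHf.mem_toFinset.mp hJ
        exact hwge I J hJH.1 hJH.2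
      have hL : ∑ J ∈ hHf.toFinset, (ENNReal.ofReal (len I) ^ s)
          = (H.ncard : ℝ≥0∞) * (ENNReal.ofReal (len I) ^ s) := by
        rw [Finset.sum_const, nsmul_eq_mul, Set.ncard_eq_toFinset_card H hHf]
      have hR : ∑ J ∈ hHf.toFinset, 𝒞.indicator (w s) J ≤ 4⁻¹ :=
        le_trans (ENNReal.sum_le_tsum _) hS
      rw [← hL]
      exact le_trans hsum hR
    calc ((rank I : ℝ≥0∞) + 1) * ENNReal.ofReal (len I) ^ s
        = (((rank I + 1 : ℕ)) : ℝ≥0∞) * ENNReal.ofReal (len I) ^ s := by push_cast; ring_nf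
      _ ≤ (H.ncard : ℝ≥0∞) * ENNReal.ofReal (len I) ^ s := by
          refine mul_le_mul_left ?_ _
          rw [hcard1]
          exact_mod_cast hcard2
      _ ≤ 4⁻¹ := hcard3
  -- slot bound, in the reals
  have hslot : ∀ I ∈ Cp, len I ≤ ((rank I : ℝ) + 2) ^ (-c) := by
    intro I hI
    set l : ℝ := len I with hl
    have hl0 : 0 < l := hI.2
    set r : ℕ := rank I with hr
    -- convert key bound to the reals
    have hreal : ((r : ℝ) + 1) * l ^ s ≤ 1/4 := by
      have h1 : ENNReal.ofReal (((r : ℝ) + 1) * l ^ s) ≤ ENNReal.ofReal (1/4) := by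
        have e1 : ENNReal.ofReal (((r : ℝ) + 1) * l ^ s)
            = ((r : ℝ≥0∞) + 1) * ENNReal.ofReal (l) ^ s := by
          rw [ENNReal.ofReal_mul (by positivity), ← ENNReal.ofReal_rpow_of_pos hl0]
          congr 1
          rw [show ((r : ℝ) + 1) = ((r + 1 : ℕ) : ℝ) by push_cast; ring,
            ENNReal.ofReal_natCast]
          push_cast
          ring
        have e2 : ENNReal.ofReal (1/4) = (4⁻¹ : ℝ≥0∞) := by
          rw [show (1/4 : ℝ) = (4:ℝ)⁻¹ by norm_num, ENNReal.ofReal_inv_of_pos (by norm_num)]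
          norm_num
        rw [e1, e2]
        exact hkey I hI
      rwa [ENNReal.ofReal_le_ofReal_iff (by norm_num)] at h1
    have hls : 0 < l ^ s := Real.rpow_pos_of_pos hl0 s
    set u : ℝ := l ^ (-s) with hu
    have huinv : u = (l ^ s)⁻¹ := by rw [hu, Real.rpow_neg hl0.le]
    have hu0 : 0 < u := by rw [huinv]; positivity
    have hu4 : 4 ≤ u := by
      have hls4 : l ^ s ≤ 1/4 := by nlinarith [hreal, hls]
      rw [huinv]
      rw [show (4:ℝ) = (1/4 : ℝ)⁻¹ by norm_num]
      exact inv_anti₀ hls hls4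
    have hr1 : ((r : ℝ) + 1) ≤ (1/4) * u := by
      rw [huinv]
      rw [← le_div_iff₀ hls] at hreal
      calc ((r : ℝ) + 1) ≤ (1/4) / (l^s) := hreal
        _ = (1/4) * (l^s)⁻¹ := by ring
    have h2 : ((r : ℝ) + 2) ≤ u^2 := by nlinarith
    have h3 : ((r : ℝ) + 2) ^ c ≤ (u^2) ^ c :=
      Real.rpow_le_rpow (by positivity) h2 hc0.le
    have h4 : ((u:ℝ)^2) ^ c = l⁻¹ := by
      have e1 : (u:ℝ)^2 = l ^ (-s * 2) := by
        rw [hu, ← Real.rpow_natCast (l ^ (-s)) 2, ← Real.rpow_mul hl0.le]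
        norm_num
      have e2 : (-s * 2) * c = -1 := by
        rw [hsdef]
        field_simp
      rw [e1, ← Real.rpow_mul hl0.le, e2, Real.rpow_neg_one]
    have h5 : ((r : ℝ) + 2) ^ c ≤ l⁻¹ := h4 ▸ h3
    have h6 := inv_anti₀ (Real.rpow_pos_of_pos (by positivity) c) h5
    rw [inv_inv] at h6
    rw [Real.rpow_neg (by positivity)]
    exact h6
  -- rank is injective on Cp
  have hmono : ∀ P ∈ Cp, ∀ Q ∈ Cp, lexlt P Q → rank P < rank Q := by
    intro P hP Q hQ hPQ
    have hsub : B P ⊆ B Q := by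
      intro R hR
      refine ⟨hR.1, ?_⟩
      rcases hR.2 with h | h <;> rcases hPQ with h' | h'
      · exact Or.inl (h'.trans h)
      · exact Or.inl (h'.1 ▸ h)
      · exact Or.inl (h.1.symm ▸ h')
      · exact Or.inr ⟨h.1.trans h'.1, h.2.trans h'.2⟩
    have hss : B P ⊂ B Q := by
      refine ⟨hsub, fun hback => ?_⟩
      exact hIBnot P (hback ⟨hP, hPQ⟩)
    exact Set.ncard_lt_ncard hss (hBfin Q hQ)
  have hrinj : ∀ I ∈ Cp, ∀ I' ∈ Cp, rank I = rank I' → I = I' := by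
    intro I hI I' hI' hr
    by_contra hne
    have htric : lexlt I I' ∨ lexlt I' I := by
      rcases lt_trichotomy (len I) (len I') with h | h | h
      · exact Or.inr (Or.inl h)
      · rcases lt_trichotomy (enc I) (enc I') with h2 | h2 | h2
        · exact Or.inl (Or.inr ⟨h, h2⟩)
        · exact absurd (hencinj h2) hne
        · exact Or.inr (Or.inr ⟨h.symm, h2⟩)
      · exact Or.inl (Or.inl h)
    rcases htric with h | h
    · exact absurd hr (hmono I hI I' hI' h).ne
    · exact absurd hr.symm (hmono I' hI' I hI h).ne
  -- build the sequence of intervals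
  set Jf : ℕ → Set ℝ := fun n => ⋃ I ∈ {I : ℚ × ℚ | I ∈ Cp ∧ rank I = n}, riSet I with hJfdef
  have hJeq : ∀ I ∈ Cp, Jf (rank I) = riSet I := by
    intro I hI
    apply Set.Subset.antisymm
    · refine Set.iUnion₂_subset fun I' hI' => ?_
      rw [hrinj I' hI'.1 I hI hI'.2]
    · exact Set.subset_biUnion_of_mem ⟨hI, rfl⟩
  have hJcases : ∀ n : ℕ, (∃ I, I ∈ Cp ∧ rank I = n ∧ Jf n = riSet I) ∨ Jf n = ∅ := by
    intro n
    by_cases h : ∃ I, I ∈ Cp ∧ rank I = n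
    · obtain ⟨I, hI, hrI⟩ := h
      exact Or.inl ⟨I, hI, hrI, by rw [← hrI, hJeq I hI]⟩
    · refine Or.imp_right (fun _ => ?_) (Or.inr trivial)
      rw [hJfdef]
      refine Set.eq_empty_of_subset_empty (Set.iUnion₂_subset fun I hI => ?_)
      exact absurd ⟨I, hI.1, hI.2⟩ h
  refine ⟨Jf, ?_, ?_, ?_⟩
  · intro n
    rcases hJcases n with ⟨I, _, _, hJn⟩ | hJn
    · rw [IsIntervalSet, hJn]
      exact Set.ordConnected_Ioo
    · rw [IsIntervalSet, hJn]
      exact Set.ordConnected_empty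
  · intro x hx
    obtain ⟨I, hI𝒞, hxI⟩ := Set.mem_iUnion₂.mp hx
    have hlenI : 0 < len I := by
      have h1 : (I.1 : ℝ) < x := hxI.1
      have h2 : x < (I.2 : ℝ) := hxI.2
      simp only [hlendef]
      linarith
    have hICp : I ∈ Cp := ⟨hI𝒞, hlenI⟩
    refine Set.mem_iUnion.mpr ⟨rank I, ?_⟩
    rw [hJeq I hICp]
    exact hxI
  · intro n
    rcases hJcases n with ⟨I, hICp, hrI, hJn⟩ | hJn
    · rw [hJn, riSet, Real.volume_Ioo]
      refine ENNReal.ofReal_le_ofReal ?_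
      have := hslot I hICp
      rw [hrI] at this
      exact this
    · rw [hJn]
      simp

end MaMln


open MaMln

theorem ma_union_mln (κ : Cardinal) (hMA : MartinsAxiom κ) (𝓕 : Set (Set ℝ))
    (hcard : Cardinal.mk ↥𝓕 ≤ κ) (h𝓕 : ∀ M ∈ 𝓕, MLn M) : MLn (⋃₀ 𝓕) := by
  intro ε hε
  classical
  set ε' : ℝ := min ε (Real.exp (-1)) with hε'def
  have hε'pos : 0 < ε' := lt_min hε (Real.exp_pos _)
  have hε'le : ε' ≤ Real.exp (-1) := min_le_right _ _
  have hlogε' : Real.log ε' ≤ -1 := by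
    calc Real.log ε' ≤ Real.log (Real.exp (-1)) := Real.log_le_log hε'pos hε'le
      _ = -1 := Real.log_exp _
  set c : ℝ := - Real.log ε' with hcdef
  have hc : 1 ≤ c := by rw [hcdef]; linarith
  have hc0 : 0 < c := lt_of_lt_of_le one_pos hc
  set s : ℝ := 1/(2*c) with hsdef
  have hs0 : 0 < s := by positivity
  have hs1 : s ≤ 1 := by
    rw [hsdef, div_le_one (by positivity)]
    linarith
  -- the dense sets
  set D : Set ℝ → Set (Cond s) := fun M => {p : Cond s | M ⊆ ⋃ I ∈ p.1, riSet I} with hDdef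
  set 𝓓 : Set (Set (Cond s)) := D '' 𝓕 with h𝓓def
  have h𝓓card : Cardinal.mk ↥𝓓 ≤ κ := le_trans Cardinal.mk_image_le hcard
  have hne : Nonempty (Cond s) := ⟨⟨∅, by rw [SumW_empty]; norm_num⟩⟩
  have hdense : ∀ Dm ∈ 𝓓, ∀ p : Cond s, ∃ q ∈ Dm, q ≤ p := by
    rintro Dm ⟨M, hM𝓕, rfl⟩ p
    have hp4 : SumW s p.1 < 4⁻¹ := p.2
    have hη : 0 < (4⁻¹ : ℝ≥0∞) - SumW s p.1 := tsub_pos_of_lt hp4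
    obtain ⟨C, hCcov, hCsum⟩ := smallCover (h𝓕 M hM𝓕) hs0 hs1 hη
    have hq : SumW s (p.1 ∪ C) < 4⁻¹ := by
      calc SumW s (p.1 ∪ C) ≤ SumW s p.1 + SumW s C := SumW_union_le _ _ _
        _ < SumW s p.1 + (4⁻¹ - SumW s p.1) :=
            ENNReal.add_lt_add_left (SumW_lt_top hp4) hCsum
        _ = 4⁻¹ := add_tsub_cancel_of_le hp4.le
    refine ⟨⟨p.1 ∪ C, hq⟩, ?_, Cond.le_def.mpr subset_union_left⟩
    intro x hx
    obtain ⟨I, hIC, hxI⟩ := Set.mem_iUnion₂.mp (hCcov hx)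
    exact Set.mem_biUnion (Set.mem_union_right _ hIC) hxI
  obtain ⟨G, hGup, hGdir, hGmeet⟩ := hMA (Cond s) hne (cond_ccc s) 𝓓 h𝓓card hdense
  set 𝒞 : Set (ℚ × ℚ) := ⋃ p ∈ G, p.1 with h𝒞def
  -- bounding the total weight of 𝒞
  have hlb : ∀ F : Finset (ℚ × ℚ), ↑F ⊆ 𝒞 → F.Nonempty → ∃ r ∈ G, ↑F ⊆ r.1 := by
    intro F
    refine Finset.induction_on F (fun _ h => absurd h (by simp)) ?_
    intro a F ha IH hsub _
    have haC : a ∈ 𝒞 := hsub (Finset.mem_insert_self a F)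
    obtain ⟨p, hpG, hap⟩ := Set.mem_iUnion₂.mp haC
    rcases F.eq_empty_or_nonempty with rfl | hFne
    · refine ⟨p, hpG, ?_⟩
      intro x hx
      rcases Finset.mem_insert.mp (by exact_mod_cast hx) with rfl | hxF
      · exact hap
      · exact absurd hxF (Finset.notMem_empty x)
    · obtain ⟨r, hrG, hrF⟩ := IH
        (fun x hx => hsub (by exact_mod_cast Finset.mem_insert_of_mem (by exact_mod_cast hx)))
        hFne
      obtain ⟨t, htG, htp, htr⟩ := hGdir p hpG r hrG
      refine ⟨t, htG, ?_⟩
      intro x hx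
      rcases Finset.mem_insert.mp (by exact_mod_cast hx) with rfl | hxF
      · exact Cond.le_def.mp htp hap
      · exact Cond.le_def.mp htr (hrF (by exact_mod_cast hxF))
  have hFsum : ∀ F : Finset (ℚ × ℚ), ↑F ⊆ 𝒞 → ∑ I ∈ F, w s I ≤ 4⁻¹ := by
    intro F hF
    rcases F.eq_empty_or_nonempty with rfl | hFne
    · simp
    · obtain ⟨r, hrG, hrF⟩ := hlb F hF hFne
      calc ∑ I ∈ F, w s I = ∑ I ∈ F, r.1.indicator (w s) I := by
            refine Finset.sum_congr rfl fun I hI => ?_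
            rw [Set.indicator_of_mem (hrF (by exact_mod_cast hI))]
        _ ≤ SumW s r.1 := ENNReal.sum_le_tsum F
        _ ≤ 4⁻¹ := r.2.le
  have hSum𝒞 : SumW s 𝒞 ≤ 4⁻¹ := by
    rw [SumW, ENNReal.tsum_eq_iSup_sum]
    refine iSup_le fun F => ?_
    have h1 : ∑ I ∈ F, 𝒞.indicator (w s) I = ∑ I ∈ F.filter (· ∈ 𝒞), w s I := by
      rw [Finset.sum_filter]
      exact Finset.sum_congr rfl fun I _ => Set.indicator_apply 𝒞 (w s) I
    rw [h1]
    exact hFsum _ (fun I hI => (Finset.mem_filter.mp hI).2)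
  have hcov : ∀ M ∈ 𝓕, M ⊆ ⋃ I ∈ 𝒞, riSet I := by
    intro M hM x hx
    obtain ⟨p, hp⟩ := hGmeet (D M) ⟨M, hM, rfl⟩
    obtain ⟨I, hIp, hxI⟩ := Set.mem_iUnion₂.mp (hp.2 hx)
    exact Set.mem_biUnion (Set.mem_biUnion hp.1 hIp) hxI
  obtain ⟨J, hJint, hJcov, hJvol⟩ := extraction hc hSum𝒞
  refine ⟨J, hJint, ?_, ?_⟩
  · intro x hx
    obtain ⟨M, hM𝓕, hxM⟩ := hx
    exact hJcov (hcov M hM𝓕 hxM)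
  · intro n
    refine le_trans (hJvol n) (ENNReal.ofReal_le_ofReal ?_)
    have hn2 : (0:ℝ) < (n:ℝ)+2 := by positivity
    have e1 : ((n:ℝ)+2) ^ (-c) = ε' ^ Real.log ((n:ℝ)+2) := by
      rw [Real.rpow_def_of_pos hn2, Real.rpow_def_of_pos hε'pos, mul_comm]
      congr 1
      rw [hcdef, neg_neg]
    rw [e1]
    exact Real.rpow_le_rpow hε'pos.le (min_le_left _ _) (Real.log_nonneg (by linarith))
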